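/- For every ε > 0, the square root of the Sinkhorn divergence fails the triangle inequality on probability measures on ℝ with quadratic cost: with r = √ε and μ_t = (1/2)δ_t + (1/2)δ_{−t}, one has √(S_ε(δ_0, μ_{2r})) > √(S_ε(δ_0, μ_r)) + √(S_ε(μ_r, μ_{2r})). -/

import Mathlib

open MeasureTheory Filter Topology Real
open scoped ENNReal

noncomputable section

/-- `γ` is a coupling of `μ` and `ν`: its marginals are `μ` and `ν`. -/
def IsCoupling {X : Type*} [MeasurableSpace X] (μ ν : Measure X) (γ : Measure (X × X)) : Prop :=
  γ.map Prod.fst = μ ∧ γ.map Prod.snd = ν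

/-- The entropic optimal transport cost
`OT_ε(μ,ν) = inf_{γ ∈ Π(μ,ν)} ∫ c dγ + ε·KL(γ | μ⊗ν)`,
where the infimum is (equivalently) taken over the couplings with finite
Kullback–Leibler divergence `KL(γ | μ⊗ν) = ∫ log(dγ/d(μ⊗ν)) dγ`
(couplings with `KL = +∞` do not contribute to the infimum). -/
noncomputable def entOT {X : Type*} [MeasurableSpace X] (ε : ℝ) (c : X → X → ℝ)
    (μ ν : Measure X) : ℝ :=
  sInf { v : ℝ | ∃ γ : Measure (X × X), IsProbabilityMeasure γ ∧ IsCoupling μ ν γ ∧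
    γ ≪ μ.prod ν ∧
    Integrable (fun p => Real.log ((γ.rnDeriv (μ.prod ν)) p).toReal) γ ∧
    v = (∫ p, c p.1 p.2 ∂γ) + ε * ∫ p, Real.log ((γ.rnDeriv (μ.prod ν)) p).toReal ∂γ }

/-- The Sinkhorn divergence
`S_ε(μ,ν) = OT_ε(μ,ν) − (1/2)·OT_ε(μ,μ) − (1/2)·OT_ε(ν,ν)`. -/
noncomputable def sinkhorn {X : Type*} [MeasurableSpace X] (ε : ℝ) (c : X → X → ℝ)
    (μ ν : Measure X) : ℝ :=
  entOT ε c μ ν - (1 / 2) * entOT ε c μ μ - (1 / 2) * entOT ε c ν ν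

/-- The symmetric two-point measure `μ_r = (1/2)δ_r + (1/2)δ_{−r}` on `ℝ`. -/
noncomputable def mu2 (r : ℝ) : Measure ℝ :=
  ((1 : ℝ≥0∞) / 2) • Measure.dirac r + ((1 : ℝ≥0∞) / 2) • Measure.dirac (-r)

/-- The quadratic cost on `ℝ`. -/
noncomputable def c2 : ℝ → ℝ → ℝ := fun x y => (x - y) ^ 2

/-- The Gaussian kernel `k_c(x,y) = exp(−(x−y)²/ε)`. -/
noncomputable def kc (ε x y : ℝ) : ℝ := Real.exp (-(x - y) ^ 2 / ε)


/-! Gibbs' inequality against the tilted measure `e^{-c/ε} (μ ⊗ ν) / Z` gives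
`∫ c dγ + ε KL(γ | μ ⊗ ν) ≥ -ε log Z` for every coupling `γ`, with equality at the tilted
measure itself. When the row and column integrals of `e^{-c/ε}` are constant, the tilted measure
is a coupling, so `OT_ε(μ, ν) = -ε log Z`. For the symmetric measures `μ_s, μ_t` this holds by
symmetry and gives `OT_ε(μ_s, μ_t) = -ε log ((e^{-(s-t)²/ε} + e^{-(s+t)²/ε}) / 2)`; since
`δ_0 = μ_0`, at `s, t ∈ {0, √ε, 2√ε}` every Sinkhorn divergence is `ε` times an explicit
constant, and the claim reduces to `√0.66… + √1.00… < √3.65…`. -/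

open InformationTheory

section Gibbs

variable {Ω : Type*} [MeasurableSpace Ω] {γ ρ : Measure Ω} {f : Ω → ℝ}

theorem integral_sub_log_integral_exp_le_integral_llr [IsProbabilityMeasure γ] [SigmaFinite ρ]
    (hγρ : γ ≪ ρ) (hfγ : Integrable f γ) (hfρ : Integrable (fun x ↦ exp (f x)) ρ)
    (hllr : Integrable (llr γ ρ) γ) :
    ∫ x, f x ∂γ - log (∫ x, exp (f x) ∂ρ) ≤ ∫ x, llr γ ρ x ∂γ := by
  have : NeZero ρ := ⟨fun h ↦ IsProbabilityMeasure.ne_zero γ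
    (Measure.absolutelyContinuous_zero_iff.mp (h ▸ hγρ))⟩
  have := isProbabilityMeasure_tilted hfρ
  have hγG : γ ≪ ρ.tilted f := hγρ.trans (absolutelyContinuous_tilted hfρ)
  have := integral_llr_add_sub_measure_univ_nonneg hγG
    (integrable_llr_tilted_right hγρ hfγ hllr hfρ)
  rw [integral_llr_tilted_right hγρ hfγ hfρ hllr] at this
  simp only [probReal_univ] at this
  linarith

theorem llr_tilted_self_ae_eq [SigmaFinite ρ] (hf : Measurable f)
    (hfρ : Integrable (fun x ↦ exp (f x)) ρ) :
    llr (ρ.tilted f) ρ =ᵐ[ρ.tilted f] fun x ↦ f x - log (∫ z, exp (f z) ∂ρ) := by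
  refine (tilted_absolutelyContinuous ρ f).ae_le ?_
  filter_upwards [llr_tilted_left (Measure.AbsolutelyContinuous.refl ρ) hfρ hf.aemeasurable,
    llr_self ρ] with x hx hx0
  simp [hx, hx0]

theorem integrable_llr_tilted_self [SigmaFinite ρ] (hf : Measurable f)
    (hfG : Integrable f (ρ.tilted f)) (hfρ : Integrable (fun x ↦ exp (f x)) ρ) :
    Integrable (llr (ρ.tilted f) ρ) (ρ.tilted f) :=
  (integrable_congr (llr_tilted_self_ae_eq hf hfρ)).mpr (hfG.sub (integrable_const _))

theorem integral_llr_tilted_self [SigmaFinite ρ] [NeZero ρ] (hf : Measurable f)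
    (hfG : Integrable f (ρ.tilted f)) (hfρ : Integrable (fun x ↦ exp (f x)) ρ) :
    ∫ x, llr (ρ.tilted f) ρ x ∂ρ.tilted f = ∫ x, f x ∂ρ.tilted f - log (∫ x, exp (f x) ∂ρ) := by
  have := isProbabilityMeasure_tilted hfρ
  rw [integral_congr_ae (llr_tilted_self_ae_eq hf hfρ), integral_sub hfG (integrable_const _)]
  simp

end Gibbs

section EntropicTransport

variable {X : Type*} [MeasurableSpace X] {ε : ℝ} {c : X → X → ℝ} {μ ν : Measure X}

theorem entOT_eq_neg_log_integral_exp [IsProbabilityMeasure μ] [IsProbabilityMeasure ν]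
    (hε : 0 < ε) (hc : Measurable fun p : X × X ↦ c p.1 p.2) {C : ℝ}
    (hC : ∀ᵐ p ∂μ.prod ν, |c p.1 p.2| ≤ C)
    (hG : IsCoupling μ ν ((μ.prod ν).tilted fun p ↦ -c p.1 p.2 / ε)) :
    entOT ε c μ ν = -ε * log (∫ p, exp (-c p.1 p.2 / ε) ∂μ.prod ν) := by
  set ρ := μ.prod ν
  set f : X × X → ℝ := fun p ↦ -c p.1 p.2 / ε
  have hf : Measurable f := hc.neg.div_const ε
  have hfC : ∀ᵐ p ∂ρ, |f p| ≤ C / ε := hC.mono fun p hp ↦ by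
    rw [abs_div, abs_neg, abs_of_pos hε]; gcongr
  have hfρ : Integrable (fun p ↦ exp (f p)) ρ :=
    .of_bound (by fun_prop) (exp (C / ε)) (hfC.mono fun p hp ↦ by
      rw [Real.norm_eq_abs, abs_exp]; exact exp_le_exp.mpr (le_of_abs_le hp))
  have hfγ : ∀ γ : Measure (X × X), γ ≪ ρ → IsFiniteMeasure γ → Integrable f γ :=
    fun γ hγρ _ ↦ .of_bound hf.aestronglyMeasurable _ (hγρ.ae_le hfC)
  have hfc : ∀ γ : Measure (X × X), ∫ p, f p ∂γ = -(∫ p, c p.1 p.2 ∂γ) / ε := fun γ ↦ by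
    rw [integral_div, integral_neg]
  change sInf _ = -ε * log (∫ p, exp (f p) ∂ρ)
  refine IsLeast.csInf_eq ⟨?_, ?_⟩
  · have := isProbabilityMeasure_tilted hfρ
    have hGρ := tilted_absolutelyContinuous ρ f
    refine ⟨ρ.tilted f, this, hG, hGρ,
      integrable_llr_tilted_self hf (hfγ _ hGρ inferInstance) hfρ, ?_⟩
    rw [← llr_def, integral_llr_tilted_self hf (hfγ _ hGρ inferInstance) hfρ, hfc]
    field_simp
    ring
  · rintro v ⟨γ, hγ, -, hγρ, hllr, rfl⟩
    have key := integral_sub_log_integral_exp_le_integral_llr hγρ (hfγ γ hγρ inferInstance)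
      hfρ hllr
    rw [hfc] at key
    rw [← llr_def]
    have := mul_le_mul_of_nonneg_left key hε.le
    rw [mul_sub, mul_div_cancel₀ _ hε.ne'] at this
    linarith

end EntropicTransport

section Marginals

variable {X Y : Type*} [MeasurableSpace X] [MeasurableSpace Y] {μ : Measure X} {ν : Measure Y}
  [SFinite μ] [SFinite ν] [NeZero (μ.prod ν)] {f : X × Y → ℝ}

theorem lintegral_ofReal_div_eq_one {Ω : Type*} [MeasurableSpace Ω] {m : Measure Ω}
    {g : Ω → ℝ} (hg : ∀ x, 0 ≤ g x) {Z : ℝ} (hZ : 0 < Z) (hgZ : ∫ x, g x ∂m = Z) :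
    ∫⁻ x, ENNReal.ofReal (g x / Z) ∂m = 1 := by
  have hint : Integrable g m := .of_integral_ne_zero (hgZ ▸ hZ.ne')
  rw [← ofReal_integral_eq_lintegral_ofReal (hint.div_const Z)
    (ae_of_all _ fun x ↦ div_nonneg (hg x) hZ.le), integral_div, hgZ, div_self hZ.ne',
    ENNReal.ofReal_one]

theorem map_fst_tilted_prod (hf : Measurable f) (hfρ : Integrable (fun p ↦ exp (f p)) (μ.prod ν))
    (h : ∀ᵐ x ∂μ, ∫ y, exp (f (x, y)) ∂ν = ∫ p, exp (f p) ∂μ.prod ν) :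
    ((μ.prod ν).tilted f).map Prod.fst = μ := by
  ext A hA
  rw [Measure.map_apply measurable_fst hA, tilted_apply' _ _ (measurable_fst hA),
    ← Set.prod_univ, setLIntegral_prod _ (by fun_prop), Measure.restrict_univ]
  calc ∫⁻ x in A, ∫⁻ y, ENNReal.ofReal (exp (f (x, y)) / ∫ p, exp (f p) ∂μ.prod ν) ∂ν ∂μ
      = ∫⁻ x in A, 1 ∂μ := setLIntegral_congr_fun_ae hA (h.mono fun x hx _ ↦
        lintegral_ofReal_div_eq_one (fun _ ↦ (exp_pos _).le) (integral_exp_pos hfρ) hx)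
    _ = μ A := setLIntegral_one A

theorem map_snd_tilted_prod (hf : Measurable f) (hfρ : Integrable (fun p ↦ exp (f p)) (μ.prod ν))
    (h : ∀ᵐ y ∂ν, ∫ x, exp (f (x, y)) ∂μ = ∫ p, exp (f p) ∂μ.prod ν) :
    ((μ.prod ν).tilted f).map Prod.snd = ν := by
  ext A hA
  rw [Measure.map_apply measurable_snd hA, tilted_apply' _ _ (measurable_snd hA),
    ← Set.univ_prod, setLIntegral_prod_symm _ (by fun_prop), Measure.restrict_univ]
  calc ∫⁻ y in A, ∫⁻ x, ENNReal.ofReal (exp (f (x, y)) / ∫ p, exp (f p) ∂μ.prod ν) ∂μ ∂ν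
      = ∫⁻ y in A, 1 ∂ν := setLIntegral_congr_fun_ae hA (h.mono fun y hy _ ↦
        lintegral_ofReal_div_eq_one (fun _ ↦ (exp_pos _).le) (integral_exp_pos hfρ) hy)
    _ = ν A := setLIntegral_one A

end Marginals

theorem mu2_zero : mu2 0 = Measure.dirac 0 := by
  rw [mu2, neg_zero, ← add_smul, ENNReal.add_halves, one_smul]

instance (r : ℝ) : IsProbabilityMeasure (mu2 r) :=
  ⟨by simp [mu2, ← two_mul, ENNReal.mul_inv_cancel]⟩

theorem ae_mu2_iff {r : ℝ} {p : ℝ → Prop} : (∀ᵐ x ∂mu2 r, p x) ↔ p r ∧ p (-r) := by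
  simp [mu2]

theorem integral_mu2 (r : ℝ) (g : ℝ → ℝ) : ∫ x, g x ∂mu2 r = (g r + g (-r)) / 2 := by
  rw [mu2, integral_add_measure ((integrable_dirac enorm_lt_top).smul_measure (by simp))
    ((integrable_dirac enorm_lt_top).smul_measure (by simp))]
  simp only [one_div, integral_smul_measure, ENNReal.toReal_inv, ENNReal.toReal_ofNat,
    integral_dirac, smul_eq_mul]
  ring

theorem integral_mu2_of_even {g : ℝ → ℝ} (hg : ∀ x, g (-x) = g x) (r : ℝ) :
    ∫ x, g x ∂mu2 r = g r := by
  rw [integral_mu2, hg, add_self_div_two]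

theorem ae_eq_integral_mu2_of_even {g : ℝ → ℝ} (hg : ∀ x, g (-x) = g x) (r : ℝ) :
    ∀ᵐ x ∂mu2 r, g x = ∫ z, g z ∂mu2 r := by
  rw [ae_mu2_iff, integral_mu2_of_even hg, hg]
  exact ⟨rfl, rfl⟩

theorem ae_abs_le_of_mu2 (r : ℝ) : ∀ᵐ x ∂mu2 r, |x| ≤ |r| := by
  rw [ae_mu2_iff, abs_neg]
  exact ⟨le_rfl, le_rfl⟩

theorem entOT_mu2_mu2 {ε : ℝ} (hε : 0 < ε) (s t : ℝ) :
    entOT ε c2 (mu2 s) (mu2 t) =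
      -ε * log ((exp (-(s - t) ^ 2 / ε) + exp (-(s + t) ^ 2 / ε)) / 2) := by
  have hc : Measurable fun p : ℝ × ℝ ↦ c2 p.1 p.2 := by unfold c2; fun_prop
  have hC : ∀ᵐ p ∂(mu2 s).prod (mu2 t), |c2 p.1 p.2| ≤ (|s| + |t|) ^ 2 := by
    filter_upwards [Measure.quasiMeasurePreserving_fst.ae (ae_abs_le_of_mu2 s),
      Measure.quasiMeasurePreserving_snd.ae (ae_abs_le_of_mu2 t)] with p hs ht
    rw [c2, abs_sq, ← sq_abs]
    gcongr
    exact (abs_sub _ _).trans (add_le_add hs ht)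
  have hk : Integrable (fun p : ℝ × ℝ ↦ exp (-c2 p.1 p.2 / ε)) ((mu2 s).prod (mu2 t)) :=
    .of_bound (by unfold c2; fun_prop) 1 (ae_of_all _ fun p ↦ by
      rw [Real.norm_eq_abs, abs_exp, exp_le_one_iff, c2]
      exact div_nonpos_of_nonpos_of_nonneg (neg_nonpos.mpr (sq_nonneg _)) hε.le)
  have hrow : ∀ x, ∫ y, exp (-c2 (-x) y / ε) ∂mu2 t = ∫ y, exp (-c2 x y / ε) ∂mu2 t := by
    intro x; simp only [integral_mu2, c2]; ring_nf
  have hcol : ∀ y, ∫ x, exp (-c2 x (-y) / ε) ∂mu2 s = ∫ x, exp (-c2 x y / ε) ∂mu2 s := by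
    intro y; simp only [integral_mu2, c2]; ring_nf
  have hZ := integral_prod _ hk
  rw [entOT_eq_neg_log_integral_exp hε hc hC ⟨map_fst_tilted_prod (by unfold c2; fun_prop) hk
    (hZ ▸ ae_eq_integral_mu2_of_even hrow s),
    map_snd_tilted_prod (by unfold c2; fun_prop) hk
    (integral_prod_symm _ hk ▸ ae_eq_integral_mu2_of_even hcol t)⟩, hZ,
    integral_mu2_of_even hrow, integral_mu2]
  simp only [c2, sub_neg_eq_add]

def twoPointEntOT (a b : ℝ) : ℝ := -log ((exp (-(a - b) ^ 2) + exp (-(a + b) ^ 2)) / 2)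

def twoPointSinkhorn (a b : ℝ) : ℝ :=
  twoPointEntOT a b - twoPointEntOT a a / 2 - twoPointEntOT b b / 2

theorem entOT_mu2_mul_sqrt {ε : ℝ} (hε : 0 < ε) (a b : ℝ) :
    entOT ε c2 (mu2 (a * √ε)) (mu2 (b * √ε)) = ε * twoPointEntOT a b := by
  have hscale : ∀ u : ℝ, -(u * √ε) ^ 2 / ε = -u ^ 2 := fun u ↦ by
    rw [mul_pow, sq_sqrt hε.le]; field_simp
  rw [entOT_mu2_mu2 hε, ← sub_mul, ← add_mul, hscale, hscale, twoPointEntOT]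
  ring

theorem sinkhorn_mu2_mul_sqrt {ε : ℝ} (hε : 0 < ε) (a b : ℝ) :
    sinkhorn ε c2 (mu2 (a * √ε)) (mu2 (b * √ε)) = ε * twoPointSinkhorn a b := by
  rw [sinkhorn, entOT_mu2_mul_sqrt hε, entOT_mu2_mul_sqrt hε, entOT_mu2_mul_sqrt hε,
    twoPointSinkhorn]
  ring

theorem twoPointEntOT_zero_left (b : ℝ) : twoPointEntOT 0 b = b ^ 2 := by
  simp [twoPointEntOT]

theorem twoPointEntOT_self (a : ℝ) :
    twoPointEntOT a a = log 2 - log (1 + exp (-(4 * a ^ 2))) := by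
  rw [twoPointEntOT, sub_self, ← two_mul, mul_pow, log_div (by positivity) two_ne_zero]
  norm_num

theorem exp_neg_four_lt : exp (-4) < 1 / 16 := by
  have h16 : 16 < exp 4 := calc
    (16 : ℝ) = 2 ^ 4 := by norm_num
    _ < exp 1 ^ 4 := by gcongr; linarith [add_one_lt_exp one_ne_zero]
    _ = exp 4 := by rw [← exp_nat_mul]; norm_num
  rw [exp_neg, one_div]
  exact inv_strictAnti₀ (by norm_num) h16

theorem sqrt_add_sqrt_le_sqrt_two_mul {a b : ℝ} (ha : 0 ≤ a) (hb : 0 ≤ b) :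
    √a + √b ≤ √(2 * (a + b)) := by
  apply Real.le_sqrt_of_sq_le
  nlinarith [sq_sqrt ha, sq_sqrt hb, sq_nonneg (√a - √b)]

theorem sqrt_twoPointSinkhorn_triangle_lt :
    √(twoPointSinkhorn 0 1) + √(twoPointSinkhorn 1 2) < √(twoPointSinkhorn 0 2) := by
  set u := exp (-4)
  have hu : u < 1 / 16 := exp_neg_four_lt
  have hl : 1 / 2 < log 2 := by linarith [log_two_gt_d9]
  have hl' : log 2 < 1 := by linarith [log_two_lt_d9]
  have hlog1 : ∀ x : ℝ, 0 ≤ x → 0 ≤ log (1 + x) ∧ log (1 + x) ≤ x := fun x hx ↦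
    ⟨log_nonneg (by linarith), by linarith [log_le_sub_one_of_pos (x := 1 + x) (by linarith)]⟩
  have h11 : log 2 - u ≤ twoPointEntOT 1 1 := by
    rw [twoPointEntOT_self, show -(4 * (1 : ℝ) ^ 2) = -4 by norm_num]
    linarith [(hlog1 u (exp_pos _).le).2]
  have h22 : log 2 - u ≤ twoPointEntOT 2 2 ∧ twoPointEntOT 2 2 ≤ log 2 := by
    have h16 : exp (-16) ≤ u := exp_le_exp.mpr (by norm_num)
    rw [twoPointEntOT_self, show -(4 * (2 : ℝ) ^ 2) = -16 by norm_num]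
    have := hlog1 (exp (-16)) (exp_pos _).le
    constructor <;> linarith
  have h12 : twoPointEntOT 1 2 ≤ 1 + log 2 := by
    have : log (exp (-1) / 2) ≤ log ((exp (-(1 - 2) ^ 2) + exp (-(1 + 2) ^ 2)) / 2) :=
      log_le_log (by positivity) (by norm_num; linarith [exp_pos (-9)])
    rw [log_div (exp_pos _).ne' two_ne_zero, log_exp] at this
    rw [twoPointEntOT]; linarith
  have hA : twoPointSinkhorn 0 1 ≤ 1 - (log 2 - u) / 2 := by
    rw [twoPointSinkhorn, twoPointEntOT_zero_left, twoPointEntOT_zero_left]; linarith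
  have hB : twoPointSinkhorn 1 2 ≤ 1 + u := by
    rw [twoPointSinkhorn]; linarith [h22.1]
  have hX : 4 - log 2 / 2 ≤ twoPointSinkhorn 0 2 := by
    rw [twoPointSinkhorn, twoPointEntOT_zero_left, twoPointEntOT_zero_left]; linarith [h22.2]
  have hu0 : 0 ≤ u := (exp_pos _).le
  calc √(twoPointSinkhorn 0 1) + √(twoPointSinkhorn 1 2)
      ≤ √(1 - (log 2 - u) / 2) + √(1 + u) := add_le_add (sqrt_le_sqrt hA) (sqrt_le_sqrt hB)
    _ ≤ √(2 * ((1 - (log 2 - u) / 2) + (1 + u))) :=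
        sqrt_add_sqrt_le_sqrt_two_mul (by linarith) (by linarith)
    _ < √(4 - log 2 / 2) := sqrt_lt_sqrt (by linarith) (by linarith)
    _ ≤ √(twoPointSinkhorn 0 2) := sqrt_le_sqrt hX

/-- **Failure of the triangle inequality for `√S_ε`.** For every `ε > 0`, with `r = √ε`
and `μ_t = (1/2)δ_t + (1/2)δ_{−t}` one has
`√(S_ε(δ_0, μ_{2r})) > √(S_ε(δ_0, μ_r)) + √(S_ε(μ_r, μ_{2r}))` for the quadratic cost. -/
theorem stmt7 (ε : ℝ) (hε : 0 < ε) :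
    Real.sqrt (sinkhorn ε c2 (Measure.dirac (0 : ℝ)) (mu2 (2 * Real.sqrt ε))) >
      Real.sqrt (sinkhorn ε c2 (Measure.dirac (0 : ℝ)) (mu2 (Real.sqrt ε)))
        + Real.sqrt (sinkhorn ε c2 (mu2 (Real.sqrt ε)) (mu2 (2 * Real.sqrt ε))) := by
  have hS : ∀ a b : ℝ, sinkhorn ε c2 (mu2 (a * √ε)) (mu2 (b * √ε)) = ε * twoPointSinkhorn a b :=
    sinkhorn_mu2_mul_sqrt hε
  rw [show Measure.dirac (0 : ℝ) = mu2 (0 * √ε) by rw [zero_mul, mu2_zero],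
    show mu2 √ε = mu2 (1 * √ε) by rw [one_mul], hS, hS, hS, sqrt_mul hε.le, sqrt_mul hε.le,
    sqrt_mul hε.le, ← mul_add]
  exact mul_lt_mul_of_pos_left sqrt_twoPointSinkhorn_triangle_lt (sqrt_pos.mpr hε)
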